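/- arXiv:2504.14859 — 5 statements merged into one kernel-verified Lean document; each statement's English description precedes it below -/
import Mathlib

section
/- Let F_0 be a field, F_1/F_0 a finite Galois extension, and F_2/F_0 a finite extension. Then the separable degrees satisfy [F_1 F_2 : F_0]_sep = [F_1 : F_0][F_2 : F_0]_sep / [F_1 ∩ F_2 : F_0]. -/
/-!
Over `K = F₁ ∩ F₂` the Galois extension `F₁` and the extension `F₂` meet in `K`, hence are linearly
disjoint, so `[F₁F₂ : F₂] = [F₁ : K]`. The extension `F₁F₂ / F₂` is generated by the separable
elements of `F₁`, so its separable degree is its degree, and the tower laws for the separable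
degree over `F₂` and for the degree over `K` give the formula.
-/

open IntermediateField

namespace IntermediateField

variable {F E : Type*} [Field F] [Field E] [Algebra F E]

theorem isSeparable_extendScalars_sup_right (A B : IntermediateField F E)
    [Algebra.IsSeparable F A] :
    Algebra.IsSeparable B (extendScalars (le_sup_right : B ≤ A ⊔ B)) := by
  have hadjoin : extendScalars (le_sup_right : B ≤ A ⊔ B) = adjoin B (A : Set E) := by
    apply restrictScalars_injective F
    rw [extendScalars_restrictScalars, restrictScalars_adjoin_eq_sup, adjoin_self, sup_comm]
  rw [hadjoin, isSeparable_adjoin_iff_isSeparable]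
  intro x hx
  exact ((Algebra.IsSeparable.isSeparable F (⟨x, hx⟩ : A)).map A.val A.val.injective).tower_top B

theorem finSepDegree_eq_finSepDegree_mul_relfinrank {B L : IntermediateField F E}
    (h : B ≤ L) [Algebra.IsSeparable B (extendScalars h)] :
    Field.finSepDegree F L = Field.finSepDegree F B * relfinrank B L := by
  rw [relfinrank_eq_finrank_of_le h, ← Field.finSepDegree_eq_finrank_of_isSeparable,
    Field.finSepDegree_mul_finSepDegree_of_isAlgebraic F B (extendScalars h)]
  rfl

theorem relfinrank_sup_eq_relfinrank_of_isGalois (A B : IntermediateField F E)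
    [IsGalois F A] [FiniteDimensional F A] [FiniteDimensional F B] :
    relfinrank B (A ⊔ B) = relfinrank B A := by
  set K := A ⊓ B
  have hA : K ≤ A := inf_le_left
  have hB : K ≤ B := inf_le_right
  have : IsGalois F (extendScalars hA) := inferInstanceAs (IsGalois F A)
  have : FiniteDimensional F (extendScalars hA) := inferInstanceAs (FiniteDimensional F A)
  have : FiniteDimensional F (extendScalars hB) := inferInstanceAs (FiniteDimensional F B)
  have : IsGalois K (extendScalars hA) := IsGalois.tower_top_of_isGalois F K _
  have : FiniteDimensional K (extendScalars hA) := FiniteDimensional.right F K _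
  have : FiniteDimensional K (extendScalars hB) := FiniteDimensional.right F K _
  have hinf : extendScalars hA ⊓ extendScalars hB = ⊥ := by
    rw [extendScalars_inf, ← extendScalars_self K]
  have hdisjoint := (LinearDisjoint.of_inf_eq_bot hinf).finrank_sup
  rw [extendScalars_sup, ← relfinrank_eq_finrank_of_le, ← relfinrank_eq_finrank_of_le,
    ← relfinrank_eq_finrank_of_le, ← relfinrank_mul_relfinrank hB le_sup_right,
    mul_comm] at hdisjoint
  have hpos : 0 < relfinrank K B :=
    Nat.pos_of_dvd_of_pos (relfinrank_dvd_finrank_bot K B) Module.finrank_pos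
  rw [← inf_relfinrank_left A B]
  exact Nat.eq_of_mul_eq_mul_right hpos hdisjoint

end IntermediateField

/-- For a finite Galois extension `F₁/F₀` and a finite extension `F₂/F₀` inside a common
algebraic closure, the separable degrees satisfy
`[F₁F₂ : F₀]_sep · [F₁ ∩ F₂ : F₀] = [F₁ : F₀] · [F₂ : F₀]_sep`. -/
theorem stmt_1 (F₀ : Type*) [Field F₀]
    (F₁ F₂ : IntermediateField F₀ (AlgebraicClosure F₀))
    [FiniteDimensional F₀ F₁] [FiniteDimensional F₀ F₂]
    [IsGalois F₀ F₁] :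
    Field.finSepDegree F₀ ↥(F₁ ⊔ F₂) * Module.finrank F₀ ↥(F₁ ⊓ F₂) =
      Module.finrank F₀ F₁ * Field.finSepDegree F₀ F₂ := by
  have := isSeparable_extendScalars_sup_right F₁ F₂
  rw [finSepDegree_eq_finSepDegree_mul_relfinrank le_sup_right,
    relfinrank_sup_eq_relfinrank_of_isGalois, ← inf_relfinrank_left,
    ← finrank_bot_mul_relfinrank (inf_le_left : F₁ ⊓ F₂ ≤ F₁)]
  ring
end

section
/- Let ℓ be a prime and N a positive integer with ℓ ∤ N. Then SL_2(ℤ/Nℤ) has no normal subgroup of index ℓ. -/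
/-!
The quotient of `SL₂(ℤ/Nℤ)` by a normal subgroup `K` of index `ℓ` has order `ℓ`, so every
element whose order divides `N` dies in it when `ℓ ∤ N`; this applies to every transvection.
Since `ℤ/Nℤ` has stable rank one (a coprime pair `a, c` admits `x` with `a + x c` a unit),
Gaussian elimination writes every element of `SL₂(ℤ/Nℤ)` as a product of transvections,
so `K` is everything and has index `1`.
-/

open MatrixGroups

theorem Subgroup.mem_of_pow_eq_one_of_coprime_index {G : Type*} [Group G] (K : Subgroup G)
    [K.Normal] {g : G} {n : ℕ} (hg : g ^ n = 1) (hn : n.Coprime K.index) : g ∈ K := by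
  have hgn : (g : G ⧸ K) ^ n = 1 := by rw [← QuotientGroup.mk_pow, hg, QuotientGroup.mk_one]
  have hgi : (g : G ⧸ K) ^ K.index = 1 := (QuotientGroup.eq_one_iff _).mpr (K.pow_index_mem g)
  have hg1 := pow_gcd_eq_one.mpr ⟨hgn, hgi⟩
  rwa [hn.gcd_eq_one, pow_one, QuotientGroup.eq_one_iff] at hg1

/-- Write `c = v d` with `v` a unit and `d ∣ N`; then `a` is a unit modulo `d`, and a unit of
`ℤ/Nℤ` lifting it differs from `a` by a multiple of `d`, i.e. of `c`. -/
theorem ZMod.exists_isUnit_add_mul_of_isCoprime {N : ℕ} [NeZero N] {a c : ZMod N}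
    (h : IsCoprime a c) : ∃ x, IsUnit (a + x * c) := by
  obtain ⟨d, hdN, v, hv, rfl⟩ := c.eq_unit_mul_divisor
  set π := ZMod.castHom hdN (ZMod d)
  have hπa : IsUnit (π a) := by
    have hπ := h.map π
    rwa [map_mul, map_natCast, ZMod.natCast_self, mul_zero, isCoprime_zero_right] at hπ
  obtain ⟨u, hu⟩ := ZMod.unitsMap_surjective hdN hπa.unit
  obtain ⟨k, hk⟩ : d ∣ ((u : ZMod N) - a).val := by
    rw [← ZMod.natCast_eq_zero_iff, ← map_natCast π, ZMod.natCast_zmod_val, map_sub, sub_eq_zero]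
    exact congrArg Units.val hu
  have hua : (u : ZMod N) = a + k * d := by
    rw [← sub_eq_iff_eq_add', ← ZMod.natCast_zmod_val ((u : ZMod N) - a), hk]
    push_cast
    ring
  refine ⟨k * ↑hv.unit⁻¹, ?_⟩
  convert u.isUnit using 1
  rw [hua]
  linear_combination (k * d : ZMod N) * hv.val_inv_mul

namespace Matrix.SpecialLinearGroup

variable {ι R : Type*} [Fintype ι] [DecidableEq ι] [CommRing R]

lemma transvection_pow {i j : ι} (hij : i ≠ j) (b : R) (n : ℕ) :
    transvection hij b ^ n = transvection hij (n * b) := by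
  induction n with
  | zero => simp
  | succ n ih => rw [pow_succ, ih, ← transvection_add, Nat.cast_succ, add_one_mul]

lemma transvection_pow_eq_one {N : ℕ} {i j : ι} (hij : i ≠ j) (b : ZMod N) :
    transvection hij b ^ N = 1 := by
  rw [transvection_pow, ZMod.natCast_self, zero_mul, transvection_coeff_zero]

variable (ι R) in
def elementary : Subgroup (SpecialLinearGroup ι R) :=
  Subgroup.closure (Set.range TransvectionStruct.toSpecialLinearGroup)

lemma transvection_mem_elementary {i j : ι} (hij : i ≠ j) (b : R) :
    transvection hij b ∈ elementary ι R :=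
  Subgroup.subset_closure ⟨⟨i, j, hij, b⟩, rfl⟩

lemma elementary_le_of_coprime_index {N : ℕ} (K : Subgroup (SpecialLinearGroup ι (ZMod N)))
    [K.Normal] (hK : N.Coprime K.index) : elementary ι (ZMod N) ≤ K := by
  rw [elementary, Subgroup.closure_le]
  rintro _ ⟨t, rfl⟩
  exact K.mem_of_pow_eq_one_of_coprime_index (transvection_pow_eq_one t.hij t.c) hK

/-- `A = L(c/u) · diag(u, u⁻¹) · U(b/u)` for `A = !![u, b; c, d]`, and
`diag(u, u⁻¹) = U(u) L(-u⁻¹) U(u) · U(-1) L(1) U(-1)` (Whitehead). -/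
lemma mem_elementary_of_isUnit_apply_zero_zero {A : SL(2, R)} (hA : IsUnit (A 0 0)) :
    A ∈ elementary (Fin 2) R := by
  obtain ⟨u, hu⟩ := hA
  set w : R := ↑u⁻¹
  have huw : (u : R) * w = 1 := u.mul_inv
  have hdet : (u : R) * A 1 1 - A 0 1 * A 1 0 = 1 := by
    rw [hu, ← det_fin_two]
    exact A.2
  have hdecomp : A = transvection one_ne_zero (A 1 0 * w) *
      (transvection zero_ne_one (u : R) * transvection one_ne_zero (-w) *
        transvection zero_ne_one (u : R) * transvection zero_ne_one (-1 : R) *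
        transvection one_ne_zero (1 : R) * transvection zero_ne_one (-1 : R)) *
      transvection zero_ne_one (w * A 0 1) := by
    ext i j
    fin_cases i <;> fin_cases j <;>
      simp only [Fin.zero_eta, Fin.mk_one, Fin.isValue, ← hu, coe_mul, transvection_coe, mul_add,
        add_mul, mul_one, one_mul, mul_neg, neg_mul, neg_neg, add_zero, zero_add, ne_eq,
        one_ne_zero, zero_ne_one, not_false_eq_true, single_mul_single_same,
        single_mul_single_of_ne, add_apply, one_apply_eq, one_apply_ne, single_apply_same,
        single_apply_of_ne, and_true, and_false, and_self] <;>
      grind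
  rw [hdecomp]
  apply_rules [mul_mem, transvection_mem_elementary]

lemma mem_elementary_of_isUnit_add_mul {A : SL(2, R)} {x : R} (hx : IsUnit (A 0 0 + x * A 1 0)) :
    A ∈ elementary (Fin 2) R := by
  have hxA : ((transvection zero_ne_one x * A : SL(2, R)) : Matrix (Fin 2) (Fin 2) R) 0 0 =
      A 0 0 + x * A 1 0 := by
    simp [transvection_coe, add_mul, Matrix.mul_apply]
  have := mem_elementary_of_isUnit_apply_zero_zero (hxA ▸ hx)
  rwa [Subgroup.mul_mem_cancel_left _ (transvection_mem_elementary _ _)] at this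

lemma elementary_fin_two_eq_top (hR : ∀ a c : R, IsCoprime a c → ∃ x, IsUnit (a + x * c)) :
    elementary (Fin 2) R = ⊤ := by
  refine eq_top_iff.mpr fun A _ ↦ ?_
  have hdet : A 0 0 * A 1 1 - A 0 1 * A 1 0 = 1 := by
    rw [← det_fin_two]
    exact A.2
  obtain ⟨x, hx⟩ := hR (A 0 0) (A 1 0) ⟨A 1 1, -A 0 1, by linear_combination hdet⟩
  exact mem_elementary_of_isUnit_add_mul hx

end Matrix.SpecialLinearGroup

/-- For a prime `ℓ` not dividing the positive integer `N`, the group `SL₂(ℤ/Nℤ)` has no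
normal subgroup of index `ℓ`. -/
theorem stmt_7 (ℓ N : ℕ) (hℓ : ℓ.Prime) (hN : 0 < N) (h : ¬ ℓ ∣ N) :
    ∀ (K : Subgroup (Matrix.SpecialLinearGroup (Fin 2) (ZMod N))) [K.Normal],
      K.index ≠ ℓ := by
  intro K _ hK
  have : NeZero N := ⟨hN.ne'⟩
  have hcop : N.Coprime K.index := hK ▸ (hℓ.coprime_iff_not_dvd.mpr h).symm
  have hKtop : K = ⊤ := by
    rw [← top_le_iff, ← Matrix.SpecialLinearGroup.elementary_fin_two_eq_top
      fun _ _ ↦ ZMod.exists_isUnit_add_mul_of_isCoprime]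
    exact Matrix.SpecialLinearGroup.elementary_le_of_coprime_index K hcop
  rw [hKtop, Subgroup.index_top] at hK
  exact hℓ.one_lt.ne hK
end

section
/- Let F be a field of characteristic ≠ 3 containing a primitive cube root of unity, and β₁, β₂ ∈ F nonzero. If F(∛β₁) = F(∛β₂) for some fixed cube roots in an algebraic closure, then there exists ε ∈ {±1} such that β₁^ε β₂ is a cube in F. -/
/-!
If `r³ = β`, then `[F(r) : F] = 3` exactly when `β` is not a cube in `F`: otherwise
`X³ - β = (X - t)(X² + tX + t²)` and `r` is a root of a factor of degree at most two.
Hence `F(r₁) = F(r₂)` makes `β₁` and `β₂` cubes simultaneously. In the non-cube case write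
`r₂ = a + b r₁ + c r₁²` and cube it: comparing coordinates in the basis `1, r₁, r₁²`
(where `3 ≠ 0` is needed) leaves only `a = 0` and `bc = 0`, that is `β₂ = b³ β₁` or
`β₂ = c³ β₁²`.
-/

open Polynomial IntermediateField

lemma three_ne_zero_of_ringChar_ne_three {F : Type*} [Field F] (h : ringChar F ≠ 3) :
    (3 : F) ≠ 0 := by
  intro h3
  have hdvd : ringChar F ∣ 3 := ringChar.dvd (by exact_mod_cast h3)
  exact h (((Nat.dvd_prime Nat.prime_three).mp hdvd).resolve_left CharP.ringChar_ne_one)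

section CubeRoot

variable {F K : Type*} [Field F] [Field K] [Algebra F K]

lemma isIntegral_of_pow_three_eq {r : K} {β : F} (hr : r ^ 3 = algebraMap F K β) :
    IsIntegral F r :=
  ⟨X ^ 3 - C β, monic_X_pow_sub_C β (by norm_num), by simp [hr]⟩

lemma natDegree_minpoly_le_two_of_pow_three_eq {r : K} {β t : F}
    (hr : r ^ 3 = algebraMap F K β) (ht : t ^ 3 = β) : (minpoly F r).natDegree ≤ 2 := by
  have hfac : (r - algebraMap F K t) * (r ^ 2 + algebraMap F K t * r + algebraMap F K t ^ 2)
      = 0 := by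
    rw [← ht, map_pow] at hr
    linear_combination hr
  rcases mul_eq_zero.mp hfac with h | h
  · have hle := minpoly.min F r (monic_X_sub_C t) (by simpa [sub_eq_zero] using h)
    exact (natDegree_le_natDegree hle).trans (by rw [natDegree_X_sub_C]; norm_num)
  · have hmonic : (X ^ 2 + C t * X + C (t ^ 2)).Monic := by monicity!
    have hle := minpoly.min F r hmonic (by simpa using h)
    exact (natDegree_le_natDegree hle).trans (by compute_degree)

lemma natDegree_minpoly_eq_three_iff {r : K} {β : F} (hr : r ^ 3 = algebraMap F K β) :
    (minpoly F r).natDegree = 3 ↔ ∀ t : F, t ^ 3 ≠ β := by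
  refine ⟨fun h t ht ↦ by have := natDegree_minpoly_le_two_of_pow_three_eq hr ht; omega,
    fun hβ ↦ ?_⟩
  rw [← minpoly.eq_of_irreducible_of_monic (X_pow_sub_C_irreducible_of_prime Nat.prime_three hβ)
    (by simp [hr]) (monic_X_pow_sub_C β (by norm_num))]
  exact natDegree_X_pow_sub_C

lemma exists_natDegree_lt_aeval_eq_of_mem_adjoin {x y : K} (hx : IsIntegral F x)
    (hy : y ∈ F⟮x⟯) : ∃ p : F[X], p.natDegree < (minpoly F x).natDegree ∧ aeval x p = y := by
  obtain ⟨p, hp, hpy⟩ := (adjoin.powerBasis hx).exists_eq_aeval ⟨y, hy⟩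
  refine ⟨p, by simpa using hp, ?_⟩
  have := congrArg (algebraMap F⟮x⟯ K) hpy
  rw [adjoin.powerBasis_gen, ← aeval_algebraMap_apply, AdjoinSimple.algebraMap_gen] at this
  exact this.symm

lemma exists_eq_add_mul_add_mul_sq_of_mem_adjoin {x y : K} (hx : IsIntegral F x)
    (hdeg : (minpoly F x).natDegree ≤ 3) (hy : y ∈ F⟮x⟯) :
    ∃ a b c : F, y = algebraMap F K a + algebraMap F K b * x + algebraMap F K c * x ^ 2 := by
  obtain ⟨p, hp, rfl⟩ := exists_natDegree_lt_aeval_eq_of_mem_adjoin hx hy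
  refine ⟨p.coeff 0, p.coeff 1, p.coeff 2, ?_⟩
  rw [aeval_eq_sum_range' (n := 3) (by omega)]
  simp [Finset.sum_range_succ, Algebra.smul_def]

lemma eq_zero_of_add_mul_add_mul_sq_eq_zero {r : K} (hdeg : 2 < (minpoly F r).natDegree)
    {a b c : F} (h : algebraMap F K a + algebraMap F K b * r + algebraMap F K c * r ^ 2 = 0) :
    a = 0 ∧ b = 0 ∧ c = 0 := by
  set P : F[X] := C a + C b * X + C c * X ^ 2
  have hP : P = 0 := by
    by_contra hne
    have hle := natDegree_le_natDegree (minpoly.degree_le_of_ne_zero F r hne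
      (by simpa [P, Algebra.smul_def] using h))
    have : P.natDegree ≤ 2 := by simp only [P]; compute_degree
    omega
  refine ⟨?_, ?_, ?_⟩
  · simpa [P] using congrArg (coeff · 0) hP
  · simpa [P] using congrArg (coeff · 1) hP
  · simpa [P] using congrArg (coeff · 2) hP

lemma cube_coeffs_of_pow_three_eq {r : K} {β₁ β₂ a b c : F}
    (hdeg : 2 < (minpoly F r).natDegree) (h3 : (3 : F) ≠ 0) (hr : r ^ 3 = algebraMap F K β₁)
    (h : (algebraMap F K a + algebraMap F K b * r + algebraMap F K c * r ^ 2) ^ 3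
      = algebraMap F K β₂) :
    a ^ 3 + 6 * a * b * c * β₁ + b ^ 3 * β₁ + c ^ 3 * β₁ ^ 2 = β₂ ∧
      a ^ 2 * b + a * c ^ 2 * β₁ + b ^ 2 * c * β₁ = 0 ∧
      a ^ 2 * c + a * b ^ 2 + b * c ^ 2 * β₁ = 0 := by
  have hcoord : algebraMap F K (a ^ 3 + 6 * a * b * c * β₁ + b ^ 3 * β₁ + c ^ 3 * β₁ ^ 2 - β₂)
      + algebraMap F K (3 * (a ^ 2 * b + a * c ^ 2 * β₁ + b ^ 2 * c * β₁)) * r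
      + algebraMap F K (3 * (a ^ 2 * c + a * b ^ 2 + b * c ^ 2 * β₁)) * r ^ 2 = 0 := by
    simp only [map_add, map_sub, map_mul, map_pow, map_ofNat, ← hr]
    linear_combination h
  obtain ⟨e₀, e₁, e₂⟩ := eq_zero_of_add_mul_add_mul_sq_eq_zero hdeg hcoord
  exact ⟨sub_eq_zero.mp e₀, (mul_eq_zero.mp e₁).resolve_left h3,
    (mul_eq_zero.mp e₂).resolve_left h3⟩

end CubeRoot

lemma exists_zpow_mul_eq_cube_of_cube_coeffs {F : Type*} [Field F] {β₁ β₂ a b c : F}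
    (h₁ : ∀ t : F, t ^ 3 ≠ β₁) (h₂ : ∀ t : F, t ^ 3 ≠ β₂)
    (e₀ : a ^ 3 + 6 * a * b * c * β₁ + b ^ 3 * β₁ + c ^ 3 * β₁ ^ 2 = β₂)
    (e₁ : a ^ 2 * b + a * c ^ 2 * β₁ + b ^ 2 * c * β₁ = 0)
    (e₂ : a ^ 2 * c + a * b ^ 2 + b * c ^ 2 * β₁ = 0) :
    ∃ ε : ℤ, (ε = 1 ∨ ε = -1) ∧ ∃ d : F, d ^ 3 = β₁ ^ ε * β₂ := by
  have hβ₁ : β₁ ≠ 0 := fun h ↦ h₁ 0 (by simp [h])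
  have ha : a = 0 := by
    by_contra ha
    by_cases hc : c = 0
    · have hb : b = 0 := by simpa [hc, ha] using e₁
      exact h₂ a (by simpa [hb, hc] using e₀)
    · have hb : b ^ 3 = β₁ * c ^ 3 := by
        have : a * (b ^ 3 - β₁ * c ^ 3) = 0 := by linear_combination b * e₂ - c * e₁
        exact sub_eq_zero.mp ((mul_eq_zero.mp this).resolve_left ha)
      exact h₁ (b / c) (by field_simp; linear_combination hb)
  subst ha
  have hbc : b = 0 ∨ c = 0 := by simpa [hβ₁] using e₁
  rcases hbc with rfl | rfl
  · exact ⟨1, .inl rfl, β₁ * c, by rw [zpow_one, ← e₀]; ring⟩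
  · exact ⟨-1, .inr rfl, b, by rw [← e₀]; field_simp; ring⟩

theorem stmt_10_general (F : Type*) [Field F] (hchar : ringChar F ≠ 3)
    (β₁ β₂ : F)
    (r₁ r₂ : AlgebraicClosure F)
    (hr₁ : r₁ ^ 3 = algebraMap F (AlgebraicClosure F) β₁)
    (hr₂ : r₂ ^ 3 = algebraMap F (AlgebraicClosure F) β₂)
    (heq : IntermediateField.adjoin F {r₁} = IntermediateField.adjoin F {r₂}) :
    ∃ ε : ℤ, (ε = 1 ∨ ε = -1) ∧ ∃ c : F, c ^ 3 = β₁ ^ ε * β₂ := by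
  have hint₁ := isIntegral_of_pow_three_eq hr₁
  have hdeg : (minpoly F r₁).natDegree = (minpoly F r₂).natDegree := by
    rw [← adjoin.finrank hint₁, ← adjoin.finrank (isIntegral_of_pow_three_eq hr₂), heq]
  by_cases hcube : ∀ t : F, t ^ 3 ≠ β₁
  · have hdeg₁ := (natDegree_minpoly_eq_three_iff hr₁).mpr hcube
    have hcube₂ := (natDegree_minpoly_eq_three_iff hr₂).mp (hdeg ▸ hdeg₁)
    obtain ⟨a, b, c, hr₂_eq⟩ := exists_eq_add_mul_add_mul_sq_of_mem_adjoin hint₁ hdeg₁.le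
      (heq ▸ mem_adjoin_simple_self F r₂)
    obtain ⟨e₀, e₁, e₂⟩ := cube_coeffs_of_pow_three_eq (by omega)
      (three_ne_zero_of_ringChar_ne_three hchar) hr₁ (hr₂_eq ▸ hr₂)
    exact exists_zpow_mul_eq_cube_of_cube_coeffs hcube hcube₂ e₀ e₁ e₂
  · obtain ⟨t, ht⟩ := not_forall_not.mp hcube
    obtain ⟨s, hs⟩ : ∃ s, s ^ 3 = β₂ := by
      by_contra! h
      have := natDegree_minpoly_le_two_of_pow_three_eq hr₁ ht
      rw [hdeg, (natDegree_minpoly_eq_three_iff hr₂).mpr h] at this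
      omega
    exact ⟨1, .inl rfl, t * s, by rw [zpow_one, mul_pow, ht, hs]⟩

/-- Let `F` be a field of characteristic `≠ 3` containing a primitive cube root of unity,
and `β₁, β₂ ∈ F` nonzero. If `F(∛β₁) = F(∛β₂)` inside an algebraic closure, then there
exists `ε ∈ {±1}` such that `β₁^ε β₂` is a cube in `F`. -/
theorem stmt_10 (F : Type*) [Field F] (hchar : ringChar F ≠ 3)
    (ω : F) (hω : IsPrimitiveRoot ω 3)
    (β₁ β₂ : F) (hβ₁ : β₁ ≠ 0) (hβ₂ : β₂ ≠ 0)
    (r₁ r₂ : AlgebraicClosure F)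
    (hr₁ : r₁ ^ 3 = algebraMap F (AlgebraicClosure F) β₁)
    (hr₂ : r₂ ^ 3 = algebraMap F (AlgebraicClosure F) β₂)
    (heq : IntermediateField.adjoin F {r₁} = IntermediateField.adjoin F {r₂}) :
    ∃ ε : ℤ, (ε = 1 ∨ ε = -1) ∧ ∃ c : F, c ^ 3 = β₁ ^ ε * β₂ :=
  stmt_10_general F hchar β₁ β₂ r₁ r₂ hr₁ hr₂ heq
end

section
/- Let F be a field with a valuation v with values in a divisible totally ordered abelian group, and let f(x) = x^n + c_1 x^{n-1} + ⋯ + c_n ∈ F[x] be monic of degree n ≥ 2 with v(n) = 0 (n invertible with valuation zero in F) and v(c_i) > (i/n)·v(c_n) for all 1 ≤ i ≤ n-1. Then v(Disc(f)) = (n-1)·v(c_n). -/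
/-!
Write `f = ∏ (X - tᵢ)`. Then `cₙ = ∏ (-tᵢ)`, so `∑ v(tᵢ) = v(cₙ)`. Every root satisfies
`n v(tᵢ) ≥ v(cₙ)`: otherwise, by the hypothesis on the `cᵢ`, the term `tᵢⁿ` would be the unique
term of least valuation in `f(tᵢ) = 0`. Summing forces `n v(tᵢ) = v(cₙ)` for all `i`, and then the
same comparison shows that `n tᵢ^{n-1}` is the dominant term of `f'(tᵢ) = ∏_{j ≠ i} (tᵢ - tⱼ)`,
so `v(f'(tᵢ)) = (n-1) v(tᵢ)`. Finally `Disc f = ± ∏ᵢ f'(tᵢ)`.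
-/

open Polynomial Finset

theorem nsmul_lt_of_nsmul_le {Γ : Type*} [AddCommGroup Γ] [LinearOrder Γ] [IsOrderedAddMonoid Γ]
    {γ δ ε : Γ} {k n : ℕ} (hγ : n • γ ≤ δ) (hε : k • δ < n • ε) : k • γ < ε := by
  refine lt_of_nsmul_lt_nsmul_right n (lt_of_le_of_lt ?_ hε)
  rw [smul_comm]
  exact nsmul_le_nsmul_right hγ k

theorem nsmul_eq_of_le_of_sum_eq {ι Γ : Type*} [Fintype ι] [AddCommGroup Γ] [LinearOrder Γ]
    [IsOrderedAddMonoid Γ] {γ : ι → Γ} {δ : Γ} (hle : ∀ i, δ ≤ Fintype.card ι • γ i)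
    (hsum : ∑ i, γ i = δ) (i : ι) : Fintype.card ι • γ i = δ := by
  have h : ∑ _j : ι, δ = ∑ j, Fintype.card ι • γ j := by
    rw [← smul_sum, hsum, sum_const, card_univ]
  exact ((sum_eq_sum_iff_of_le fun j _ => hle j).1 h i (mem_univ i)).symm

theorem eval_derivative_prod_X_sub_C {R ι : Type*} [CommRing R] [Fintype ι] [DecidableEq ι]
    (t : ι → R) (i : ι) :
    (derivative (∏ j, (X - C (t j)))).eval (t i) = ∏ j ∈ univ.erase i, (t i - t j) := by
  rw [← mul_prod_erase univ _ (mem_univ i)]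
  simp [eval_prod]

theorem prod_prod_erase_sub_eq {R ι : Type*} [CommRing R] [Fintype ι] [LinearOrder ι]
    (t : ι → R) :
    ∏ i, ∏ j ∈ univ.erase i, (t i - t j) =
      (-1) ^ #{p : ι × ι | p.1 < p.2} * (∏ p : ι × ι with p.1 < p.2, (t p.1 - t p.2)) ^ 2 := by
  have hpairs : ∏ i, ∏ j ∈ univ.erase i, (t i - t j) =
      ∏ p : ι × ι with p.1 ≠ p.2, (t p.1 - t p.2) := by
    simp_rw [← filter_ne', prod_filter, Fintype.prod_prod_type, ne_comm]
  have hsplit : ∏ p : ι × ι with p.1 ≠ p.2, (t p.1 - t p.2) =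
      (∏ p : ι × ι with p.1 < p.2, (t p.1 - t p.2)) *
        ∏ p : ι × ι with p.2 < p.1, (t p.1 - t p.2) := by
    rw [← prod_union (disjoint_filter.2 fun p _ h h' => lt_asymm h h'), ← filter_or]
    simp_rw [ne_iff_lt_or_gt]
  have hswap : ∏ p : ι × ι with p.2 < p.1, (t p.1 - t p.2) =
      ∏ p : ι × ι with p.1 < p.2, -(t p.1 - t p.2) :=
    prod_equiv (Equiv.prodComm ι ι) (by simp) (by simp)
  rw [hpairs, hsplit, hswap, prod_neg]
  ring

section MonicPoly

variable {F : Type*} [CommRing F]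

noncomputable def monicPoly (n : ℕ) (c : ℕ → F) : F[X] :=
  X ^ n + ∑ i ∈ range n, C (c (i + 1)) * X ^ (n - (i + 1))

theorem eval_monicPoly (n : ℕ) (c : ℕ → F) (x : F) :
    (monicPoly n c).eval x = x ^ n + ∑ k ∈ range n, c (k + 1) * x ^ (n - (k + 1)) := by
  simp [monicPoly, eval_finsetSum]

theorem eval_zero_monicPoly {n : ℕ} (hn : n ≠ 0) (c : ℕ → F) :
    (monicPoly n c).eval 0 = c n := by
  rw [eval_monicPoly, zero_pow hn, zero_add, sum_eq_single (n - 1)]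
  · simp [Nat.sub_add_cancel (Nat.one_le_iff_ne_zero.2 hn)]
  · intro k hk hkn
    rw [zero_pow (by simp at hk; omega), mul_zero]
  · simp [hn]

theorem eval_derivative_monicPoly (n : ℕ) (c : ℕ → F) (x : F) :
    (derivative (monicPoly n c)).eval x = n * x ^ (n - 1) +
      ∑ k ∈ range n, c (k + 1) * ((n - (k + 1) : ℕ) : F) * x ^ (n - (k + 1) - 1) := by
  simp only [monicPoly, derivative_add, derivative_X_pow, derivative_sum, derivative_C_mul_X_pow,
    eval_add, eval_finsetSum, eval_mul, eval_C, eval_pow, eval_X]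

end MonicPoly

structure IsValuationOnNonzero {F Γ : Type*} [CommRing F] [AddCommGroup Γ] [LinearOrder Γ]
    [IsOrderedAddMonoid Γ] (v : F → Γ) : Prop where
  map_mul : ∀ a b : F, a ≠ 0 → b ≠ 0 → v (a * b) = v a + v b
  min_le_map_add : ∀ a b : F, a ≠ 0 → b ≠ 0 → a + b ≠ 0 → min (v a) (v b) ≤ v (a + b)

namespace IsValuationOnNonzero

variable {F Γ : Type*} [CommRing F] [IsDomain F] [AddCommGroup Γ] [LinearOrder Γ]
  [IsOrderedAddMonoid Γ] {v : F → Γ}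

theorem map_one (hv : IsValuationOnNonzero v) : v 1 = 0 := by
  simpa using hv.map_mul 1 1 one_ne_zero one_ne_zero

open Classical in
noncomputable def toAddValuation (hv : IsValuationOnNonzero v) : AddValuation F (WithTop Γ) :=
  AddValuation.of (fun x => if x = 0 then ⊤ else (v x : WithTop Γ)) (if_pos rfl)
    (by simp [hv.map_one])
    (fun x y => by
      by_cases hx : x = 0
      · simp [hx]
      by_cases hy : y = 0
      · simp [hy]
      by_cases hxy : x + y = 0
      · simp [hxy]
      simp only [hx, hy, hxy, if_false]
      exact_mod_cast hv.min_le_map_add x y hx hy hxy)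
    (fun x y => by
      by_cases hx : x = 0
      · simp [hx]
      by_cases hy : y = 0
      · simp [hy]
      simp [hx, hy, hv.map_mul x y hx hy])

theorem toAddValuation_apply (hv : IsValuationOnNonzero v) {x : F} (hx : x ≠ 0) :
    hv.toAddValuation x = v x :=
  if_neg hx

theorem map_neg (hv : IsValuationOnNonzero v) {a : F} (ha : a ≠ 0) : v (-a) = v a := by
  have h := hv.toAddValuation.map_neg a
  rwa [hv.toAddValuation_apply (neg_ne_zero.2 ha), hv.toAddValuation_apply ha,
    WithTop.coe_eq_coe] at h

theorem map_neg_one_pow_mul (hv : IsValuationOnNonzero v) {a : F} (ha : a ≠ 0) (m : ℕ) :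
    v ((-1) ^ m * a) = v a := by
  rcases neg_one_pow_eq_or F m with h | h <;> simp [h, hv.map_neg ha]

theorem map_pow (hv : IsValuationOnNonzero v) {a : F} (ha : a ≠ 0) (k : ℕ) :
    v (a ^ k) = k • v a := by
  have h := hv.toAddValuation.map_pow a k
  rwa [hv.toAddValuation_apply (pow_ne_zero k ha), hv.toAddValuation_apply ha,
    ← WithTop.coe_nsmul, WithTop.coe_eq_coe] at h

theorem map_prod (hv : IsValuationOnNonzero v) {ι : Type*} (s : Finset ι) (f : ι → F)
    (hf : ∀ i ∈ s, f i ≠ 0) : v (∏ i ∈ s, f i) = ∑ i ∈ s, v (f i) := by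
  induction s using Finset.cons_induction with
  | empty => simpa using hv.map_one
  | cons a s ha ih =>
    rw [prod_cons, sum_cons, hv.map_mul _ _ (hf a (mem_cons_self a s))
      (prod_ne_zero_iff.2 fun i hi => hf i (mem_cons_of_mem hi)),
      ih fun i hi => hf i (mem_cons_of_mem hi)]

theorem natCast_nonneg (hv : IsValuationOnNonzero v) {m : ℕ} (hm : (m : F) ≠ 0) :
    0 ≤ v m := by
  have h : (0 : WithTop Γ) ≤ hv.toAddValuation (∑ _i ∈ range m, (1 : F)) :=
    hv.toAddValuation.map_le_sum fun _ _ => (hv.toAddValuation.map_one).ge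
  rw [sum_const, card_range, nsmul_one, hv.toAddValuation_apply hm] at h
  exact_mod_cast h

theorem add_sum_eq_of_lt (hv : IsValuationOnNonzero v) {ι : Type*} {s : Finset ι} {a : F}
    {b : ι → F} (ha : a ≠ 0) (hb : ∀ i ∈ s, b i ≠ 0 → v a < v (b i)) :
    a + ∑ i ∈ s, b i ≠ 0 ∧ v (a + ∑ i ∈ s, b i) = v a := by
  set w := hv.toAddValuation
  have hlt : w a < w (∑ i ∈ s, b i) := by
    refine w.map_lt_sum (by simp [w, hv.toAddValuation_apply ha]) fun i hi => ?_
    by_cases hbi : b i = 0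
    · simp [w, hbi, hv.toAddValuation_apply ha]
    · rw [hv.toAddValuation_apply ha, hv.toAddValuation_apply hbi]
      exact_mod_cast hb i hi hbi
  have heq : w (a + ∑ i ∈ s, b i) = w a := w.map_add_eq_of_lt_left hlt
  have hne : a + ∑ i ∈ s, b i ≠ 0 := by
    intro h
    rw [h, w.map_zero, hv.toAddValuation_apply ha] at heq
    exact WithTop.top_ne_coe heq
  rw [hv.toAddValuation_apply hne, hv.toAddValuation_apply ha, WithTop.coe_eq_coe] at heq
  exact ⟨hne, heq⟩

/-- If `n • v x < v (c n)`, the term `x ^ n` would dominate `(monicPoly n c).eval x`. -/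
theorem le_nsmul_of_isRoot (hv : IsValuationOnNonzero v) {n : ℕ} {c : ℕ → F}
    (hci : ∀ i : ℕ, 1 ≤ i → i ≤ n - 1 → c i ≠ 0 → i • v (c n) < n • v (c i))
    {x : F} (hx : x ≠ 0) (hroot : (monicPoly n c).IsRoot x) : v (c n) ≤ n • v x := by
  by_contra! hlt
  refine (hv.add_sum_eq_of_lt (pow_ne_zero n hx) fun k hk hterm => ?_).1
    ((eval_monicPoly n c x).symm.trans hroot)
  have hc : c (k + 1) ≠ 0 := left_ne_zero_of_mul hterm
  have hkn : k + 1 ≤ n := mem_range.1 hk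
  rw [hv.map_mul _ _ hc (pow_ne_zero _ hx), hv.map_pow hx, hv.map_pow hx]
  rcases hkn.eq_or_lt with rfl | hkn
  · simpa using hlt
  · conv_lhs => rw [← Nat.add_sub_of_le hkn.le, add_nsmul]
    exact add_lt_add_left (nsmul_lt_of_nsmul_le hlt.le (hci _ (by omega) (by omega) hc)) _

/-- If `n • v x ≤ v (c n)`, the term `n * x ^ (n - 1)` dominates
`(derivative (monicPoly n c)).eval x`. -/
theorem map_eval_derivative_monicPoly (hv : IsValuationOnNonzero v) {n : ℕ} {c : ℕ → F}
    (hnF : (n : F) ≠ 0) (hvn : v (n : F) = 0)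
    (hci : ∀ i : ℕ, 1 ≤ i → i ≤ n - 1 → c i ≠ 0 → i • v (c n) < n • v (c i))
    {x : F} (hx : x ≠ 0) (hle : n • v x ≤ v (c n)) :
    (derivative (monicPoly n c)).eval x ≠ 0 ∧
      v ((derivative (monicPoly n c)).eval x) = (n - 1) • v x := by
  have hlead : v (n * x ^ (n - 1)) = (n - 1) • v x := by
    rw [hv.map_mul _ _ hnF (pow_ne_zero _ hx), hvn, zero_add, hv.map_pow hx]
  rw [eval_derivative_monicPoly, ← hlead]
  refine hv.add_sum_eq_of_lt (mul_ne_zero hnF (pow_ne_zero _ hx)) fun k hk hterm => ?_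
  have hc : c (k + 1) ≠ 0 := left_ne_zero_of_mul (left_ne_zero_of_mul hterm)
  have hm : ((n - (k + 1) : ℕ) : F) ≠ 0 := right_ne_zero_of_mul (left_ne_zero_of_mul hterm)
  obtain ⟨m, rfl⟩ : ∃ m, n = k + 1 + m + 1 := by
    refine ⟨n - (k + 1) - 1, ?_⟩
    have : n - (k + 1) ≠ 0 := fun h => hm (by rw [h, Nat.cast_zero])
    omega
  have hsub : k + 1 + m + 1 - (k + 1) = m + 1 := by omega
  rw [hsub] at hm ⊢
  rw [hlead, hv.map_mul _ _ (mul_ne_zero hc hm) (pow_ne_zero _ hx), hv.map_mul _ _ hc hm,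
    hv.map_pow hx, show k + 1 + m + 1 - 1 = (k + 1) + m by omega, show m + 1 - 1 = m by omega,
    add_nsmul]
  have hkey : (k + 1) • v x < v (c (k + 1)) :=
    nsmul_lt_of_nsmul_le hle (hci _ (by omega) (by omega) hc)
  calc (k + 1) • v x + m • v x < v (c (k + 1)) + m • v x := add_lt_add_left hkey _
    _ ≤ v (c (k + 1)) + v ((m + 1 : ℕ) : F) + m • v x := by
      gcongr
      exact le_add_of_nonneg_right (hv.natCast_nonneg hm)

end IsValuationOnNonzero

/-- Let `F` be a field with a valuation `v`, and `f(x) = x^n + c₁x^{n-1} + ⋯ + cₙ` monic of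
degree `n ≥ 2` with `v(n) = 0` and `v(cᵢ) > (i/n)·v(cₙ)` for `1 ≤ i ≤ n-1` (stated
fraction-freely as `n • v(cᵢ) > i • v(cₙ)`). Then `v(Disc f) = (n-1) • v(cₙ)`, where the
discriminant is computed as the square of the product of differences of the roots. -/
theorem stmt_16 (F : Type*) [Field F] (Γ : Type*) [AddCommGroup Γ] [LinearOrder Γ] [IsOrderedAddMonoid Γ]
    (v : F → Γ)
    (hmul : ∀ a b : F, a ≠ 0 → b ≠ 0 → v (a * b) = v a + v b)
    (hadd : ∀ a b : F, a ≠ 0 → b ≠ 0 → a + b ≠ 0 → min (v a) (v b) ≤ v (a + b))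
    (n : ℕ) (hn : 2 ≤ n) (c : ℕ → F) (t : Fin n → F)
    (hnF : (n : F) ≠ 0) (hvn : v (n : F) = 0)
    (hcn : c n ≠ 0)
    (hci : ∀ i : ℕ, 1 ≤ i → i ≤ n - 1 → c i ≠ 0 → i • v (c n) < n • v (c i))
    (hroots : (X ^ n + ∑ i ∈ Finset.range n, C (c (i + 1)) * X ^ (n - (i + 1)) : F[X]) =
      ∏ i : Fin n, (X - C (t i))) :
    (∏ p ∈ Finset.univ.filter (fun p : Fin n × Fin n => p.1 < p.2), (t p.1 - t p.2)) ^ 2 ≠ 0 ∧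
      v ((∏ p ∈ Finset.univ.filter (fun p : Fin n × Fin n => p.1 < p.2),
          (t p.1 - t p.2)) ^ 2) = (n - 1) • v (c n) := by
  have hv : IsValuationOnNonzero v := ⟨hmul, hadd⟩
  have hf : monicPoly n c = ∏ i : Fin n, (X - C (t i)) := hroots
  have hcn_prod : c n = ∏ i, -t i := by
    rw [← eval_zero_monicPoly (by omega) c, hf, eval_prod]
    simp
  have ht : ∀ i, t i ≠ 0 := fun i h =>
    hcn (hcn_prod ▸ prod_eq_zero (mem_univ i) (by rw [h, neg_zero]))
  have hroot : ∀ i, (monicPoly n c).IsRoot (t i) := fun i => by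
    simpa [hf, eval_prod] using prod_eq_zero (mem_univ i) (sub_self (t i))
  have hsum : ∑ i, v (t i) = v (c n) := by
    rw [hcn_prod, hv.map_prod _ _ fun i _ => neg_ne_zero.2 (ht i)]
    exact sum_congr rfl fun i _ => (hv.map_neg (ht i)).symm
  have hvt : ∀ i, n • v (t i) = v (c n) := by
    have hle : ∀ i, v (c n) ≤ Fintype.card (Fin n) • v (t i) := fun i => by
      simpa using hv.le_nsmul_of_isRoot hci (ht i) (hroot i)
    simpa using nsmul_eq_of_le_of_sum_eq hle hsum
  have hderiv : ∀ i, ∏ j ∈ univ.erase i, (t i - t j) ≠ 0 ∧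
      v (∏ j ∈ univ.erase i, (t i - t j)) = (n - 1) • v (t i) := fun i => by
    rw [← eval_derivative_prod_X_sub_C, ← hf]
    exact hv.map_eval_derivative_monicPoly hnF hvn hci (ht i) (hvt i).le
  have hdisc := prod_prod_erase_sub_eq t
  have hne : ∏ i, ∏ j ∈ univ.erase i, (t i - t j) ≠ 0 :=
    prod_ne_zero_iff.2 fun i _ => (hderiv i).1
  rw [hdisc] at hne
  refine ⟨right_ne_zero_of_mul hne, ?_⟩
  rw [← hv.map_neg_one_pow_mul (right_ne_zero_of_mul hne), ← hdisc,
    hv.map_prod _ _ fun i _ => (hderiv i).1, sum_congr rfl fun i _ => (hderiv i).2,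
    ← smul_sum, hsum]
end

section
/- Let F be a field of characteristic p ≥ 5 containing √3 and a primitive cube root of unity, equipped with a valuation v. Let f(x) = x^3 + c_1 x^2 + c_2 x + c_3 ∈ F[x] be irreducible with cyclic (degree 3) Galois group over F, and suppose v(c_1) > v(c_3)/3 and v(c_2) > 2v(c_3)/3. Then the splitting field of f over F is F(∛β) for some β ∈ F with v(β) = v(c_3). -/
/-!
Let `σ` generate `Gal(f) ≅ ℤ/3` and let `r₁`, `r₂ = σ r₁`, `r₃ = σ r₂` be the roots of `f`. The
Lagrange resolvents `δ = r₁ + ω r₂ + ω² r₃` and `δ' = r₁ + ω² r₂ + ω r₃` are eigenvectors of `σ`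
with eigenvalues `ω²` and `ω`, so `b = δ³` and `b' = δ'³` lie in `F`, and each of `δ`, `δ'`
generates the splitting field as soon as it is nonzero. Vieta's formulas give
`b + b' = -Δ₁` and `b b' = Δ₀³`. The bounds on `v(c₁)` and `v(c₂)` make `27 c₃` the dominant
term of `Δ₁`, so `v(b + b') = v(c₃)`, and give `3 v(Δ₀) > 2 v(c₃)`. Thus
`v(b) + v(b') > 2 v(b + b')`, which by the ultrametric inequality forces `v(b) ≠ v(b')`, and then
the smaller of the two is `v(b + b') = v(c₃)`. Extending `v` by `v(0) = ∞` to an additive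
valuation lets vanishing coefficients and `b b' = 0` go through the same argument.
-/

open Polynomial

-- `Δ₀` and `Δ₁` of Cardano's formula for the monic cubic `X³ + c₁ X² + c₂ X + c₃`.
def cubicDelta0 {R : Type*} [CommRing R] (c₁ c₂ : R) : R := c₁ ^ 2 - 3 * c₂

def cubicDelta1 {R : Type*} [CommRing R] (c₁ c₂ c₃ : R) : R :=
  2 * c₁ ^ 3 - 9 * c₁ * c₂ + 27 * c₃

section LagrangeResolvent

variable {R : Type*} [CommRing R]

def lagrangeResolvent (ω a b c : R) : R := a + ω * b + ω ^ 2 * c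

theorem map_lagrangeResolvent {S G : Type*} [CommRing S] [FunLike G R S] [RingHomClass G R S]
    (φ : G) (ω a b c : R) :
    φ (lagrangeResolvent ω a b c) = lagrangeResolvent (φ ω) (φ a) (φ b) (φ c) := by
  simp [lagrangeResolvent]

variable {ω : R}

theorem lagrangeResolvent_rotate_left (hω : ω ^ 3 = 1) (a b c : R) :
    lagrangeResolvent ω b c a = ω ^ 2 * lagrangeResolvent ω a b c := by
  unfold lagrangeResolvent; linear_combination (-(b + ω * c)) * hω

theorem lagrangeResolvent_rotate_right (hω : ω ^ 3 = 1) (a b c : R) :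
    lagrangeResolvent ω c a b = ω * lagrangeResolvent ω a b c := by
  unfold lagrangeResolvent; linear_combination (-c) * hω

theorem lagrangeResolvent_mul_swap (hω : ω ^ 2 + ω + 1 = 0) (a b c : R) :
    lagrangeResolvent ω a b c * lagrangeResolvent ω a c b =
      (a + b + c) ^ 2 - 3 * (a * b + a * c + b * c) := by
  unfold lagrangeResolvent
  linear_combination (ω ^ 2 * b * c + ω * b ^ 2 - ω * b * c + ω * c ^ 2 + a * b + a * c
    - b ^ 2 + b * c - c ^ 2) * hω

theorem lagrangeResolvent_pow_three_add_swap (hω : ω ^ 2 + ω + 1 = 0) (a b c : R) :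
    lagrangeResolvent ω a b c ^ 3 + lagrangeResolvent ω a c b ^ 3 =
      2 * (a + b + c) ^ 3 - 9 * (a + b + c) * (a * b + a * c + b * c) + 27 * (a * b * c) := by
  unfold lagrangeResolvent
  linear_combination (ω^4*b^3 + ω^4*c^3 - ω^3*b^3 + 3*ω^3*b^2*c + 3*ω^3*b*c^2
      - ω^3*c^3 + 3*ω^2*a*b^2 + 3*ω^2*a*c^2 - 3*ω*a*b^2 + 12*ω*a*b*c
      - 3*ω*a*c^2 + 2*ω*b^3 - 3*ω*b^2*c - 3*ω*b*c^2 + 2*ω*c^3 + 3*a^2*b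
      + 3*a^2*c + 3*a*b^2 - 12*a*b*c + 3*a*c^2 - 2*b^3 + 3*b^2*c
      + 3*b*c^2 - 2*c^3) * hω

end LagrangeResolvent

theorem cubic_vieta {R : Type*} [CommRing R] [IsDomain R] {a b c x y z : R}
    (hx : x ^ 3 + a * x ^ 2 + b * x + c = 0) (hy : y ^ 3 + a * y ^ 2 + b * y + c = 0)
    (hz : z ^ 3 + a * z ^ 2 + b * z + c = 0) (hxy : x ≠ y) (hxz : x ≠ z) (hyz : y ≠ z) :
    a = -(x + y + z) ∧ b = x * y + x * z + y * z ∧ c = -(x * y * z) := by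
  have hxy' : x ^ 2 + x * y + y ^ 2 + a * (x + y) + b = 0 :=
    (mul_eq_zero.mp (by linear_combination hx - hy :
      (x - y) * (x ^ 2 + x * y + y ^ 2 + a * (x + y) + b) = 0)).resolve_left (sub_ne_zero.mpr hxy)
  have hxz' : x ^ 2 + x * z + z ^ 2 + a * (x + z) + b = 0 :=
    (mul_eq_zero.mp (by linear_combination hx - hz :
      (x - z) * (x ^ 2 + x * z + z ^ 2 + a * (x + z) + b) = 0)).resolve_left (sub_ne_zero.mpr hxz)
  have ha : x + y + z + a = 0 :=
    (mul_eq_zero.mp (by linear_combination hxy' - hxz' :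
      (y - z) * (x + y + z + a) = 0)).resolve_left (sub_ne_zero.mpr hyz)
  refine ⟨by linear_combination ha, by linear_combination hxy' - (x + y) * ha, ?_⟩
  linear_combination hx - x * hxy' + (x * y) * ha

theorem Irreducible.separable_of_not_dvd_natDegree {F : Type*} [Field F] (p : ℕ)
    [CharP F p] {f : F[X]} (hf : Irreducible f) (hp : ¬p ∣ f.natDegree) : f.Separable :=
  (separable_or p hf).resolve_right fun ⟨_, g, _, hg⟩ =>
    hp ⟨g.natDegree, by rw [← hg, natDegree_expand, mul_comm]⟩

section Galois

variable {F K : Type*} [Field F] [Field K] [Algebra F K]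

open IntermediateField

theorem IntermediateField.adjoin_simple_eq_top_of_finrank_prime
    (hp : (Module.finrank F K).Prime) {x : K} (hx : x ∉ (⊥ : IntermediateField F K)) :
    F⟮x⟯ = ⊤ := by
  have := isSimpleOrder_of_finrank_prime F K hp
  exact (eq_bot_or_eq_top _).resolve_left (by rwa [adjoin_simple_eq_bot_iff])

theorem Irreducible.notMem_bot_of_aeval_eq_zero {f : F[X]} (hf : Irreducible f)
    (hdeg : f.degree ≠ 1) {x : K} (hx : aeval x f = 0) : x ∉ (⊥ : IntermediateField F K) := by
  intro h
  obtain ⟨y, rfl⟩ := mem_bot.mp h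
  rw [aeval_algebraMap_apply, map_eq_zero_iff _ (algebraMap F K).injective] at hx
  exact hdeg (degree_eq_one_of_irreducible_of_root hf (by simpa [aeval_def] using hx))

theorem mem_bot_of_apply_eq_self [FiniteDimensional F K] [IsGalois F K] {σ : Gal(K/F)}
    (hσ : Subgroup.zpowers σ = ⊤) {x : K} (hx : σ x = x) : x ∈ (⊥ : IntermediateField F K) := by
  rw [IsGalois.mem_bot_iff_fixed]
  intro τ
  have hstab : Subgroup.zpowers σ ≤ MulAction.stabilizer Gal(K/F) x :=
    Subgroup.zpowers_le.mpr hx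
  exact hstab (hσ ▸ Subgroup.mem_top τ)

theorem pow_mem_bot_of_apply_eq_mul [FiniteDimensional F K] [IsGalois F K] {σ : Gal(K/F)}
    (hσ : Subgroup.zpowers σ = ⊤) {ζ : F} {n : ℕ} (hζ : ζ ^ n = 1) {δ : K}
    (hδ : σ δ = algebraMap F K ζ * δ) : δ ^ n ∈ (⊥ : IntermediateField F K) :=
  mem_bot_of_apply_eq_self hσ (by rw [map_pow, hδ, mul_pow, ← map_pow, hζ, map_one, one_mul])

theorem adjoin_simple_eq_top_of_apply_eq_mul (hp : (Module.finrank F K).Prime) {σ : Gal(K/F)}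
    {ζ : F} (hζ : ζ ≠ 1) {δ : K} (hδ₀ : δ ≠ 0) (hδ : σ δ = algebraMap F K ζ * δ) : F⟮δ⟯ = ⊤ := by
  refine adjoin_simple_eq_top_of_finrank_prime hp ?_
  intro h
  obtain ⟨y, rfl⟩ := mem_bot.mp h
  rw [AlgEquiv.commutes, ← map_mul, (algebraMap F K).injective.eq_iff] at hδ
  exact hζ (mul_right_cancel₀ (by simpa using hδ₀) (hδ.symm.trans (one_mul y).symm))

end Galois

section Valuation

variable {F Γ : Type*} [Field F] [AddCommGroup Γ] [LinearOrder Γ] [IsOrderedAddMonoid Γ]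

theorem map_one_eq_zero_of_map_mul {v : F → Γ}
    (hmul : ∀ a b : F, a ≠ 0 → b ≠ 0 → v (a * b) = v a + v b) : v 1 = 0 := by
  simpa using hmul 1 1 one_ne_zero one_ne_zero

noncomputable def AddValuation.ofNonzero (v : F → Γ)
    (hmul : ∀ a b : F, a ≠ 0 → b ≠ 0 → v (a * b) = v a + v b)
    (hadd : ∀ a b : F, a ≠ 0 → b ≠ 0 → a + b ≠ 0 → min (v a) (v b) ≤ v (a + b)) :
    AddValuation F (WithTop Γ) := by
  classical
  exact AddValuation.of (fun x => if x = 0 then ⊤ else (v x : WithTop Γ)) (by simp)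
    (by simp [map_one_eq_zero_of_map_mul hmul])
    (by
      intro x y
      by_cases hx : x = 0; · simp [hx]
      by_cases hy : y = 0; · simp [hy]
      by_cases hxy : x + y = 0; · simp [hxy]
      simp only [hx, hy, hxy, if_false, ← WithTop.coe_min, WithTop.coe_le_coe]
      exact hadd x y hx hy hxy)
    (by
      intro x y
      by_cases hx : x = 0; · simp [hx]
      by_cases hy : y = 0; · simp [hy]
      simp [hx, hy, hmul x y hx hy])

variable {v : F → Γ} {hmul : ∀ a b : F, a ≠ 0 → b ≠ 0 → v (a * b) = v a + v b}
  {hadd : ∀ a b : F, a ≠ 0 → b ≠ 0 → a + b ≠ 0 → min (v a) (v b) ≤ v (a + b)}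

theorem AddValuation.ofNonzero_apply {x : F} (hx : x ≠ 0) :
    AddValuation.ofNonzero v hmul hadd x = v x := by
  simp [AddValuation.ofNonzero, hx]

theorem AddValuation.coe_lt_nsmul_ofNonzero {g : Γ} {c : F} {n : ℕ} (hn : n ≠ 0)
    (h : c ≠ 0 → g < n • v c) : (g : WithTop Γ) < n • AddValuation.ofNonzero v hmul hadd c := by
  by_cases hc : c = 0
  · obtain ⟨k, rfl⟩ := Nat.exists_eq_succ_of_ne_zero hn
    simp [hc, succ_nsmul]
  · simpa [ofNonzero_apply hc, ← WithTop.coe_nsmul] using h hc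

end Valuation

namespace AddValuation

section LinearOrderedAddCommMonoidWithTop

variable {R Γ₀ : Type*} [Ring R] [LinearOrderedAddCommMonoidWithTop Γ₀] (w : AddValuation R Γ₀)

theorem map_natCast_of_charP (p : ℕ) [Fact p.Prime] [CharP R p] {n : ℕ} (hn : ¬p ∣ n) :
    w n = 0 := by
  let := ZMod.algebra R p
  have hn' : (n : ZMod p) ≠ 0 := by rwa [Ne, ZMod.natCast_eq_zero_iff]
  simpa using FiniteField.valuation_algebraMap_eq_one (toValuation w) _ hn'

theorem exists_mem_pair_map_eq_map_add {b b' : R} (h : 2 • w (b + b') < w (b * b')) :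
    ∃ β ∈ ({b, b'} : Set R), w β = w (b + b') := by
  have hlt := lt_max_of_two_nsmul_lt_add (h.trans_eq (w.map_mul b b'))
  have hle := w.map_add b b'
  by_cases heq : w b = w b'
  · rw [heq, max_self] at hlt
    rw [heq, min_self] at hle
    exact absurd hle hlt.not_ge
  · rw [w.map_add_of_distinct_val heq]
    rcases min_choice (w b) (w b') with hmin | hmin
    · exact ⟨b, by simp, hmin.symm⟩
    · exact ⟨b', by simp, hmin.symm⟩

end LinearOrderedAddCommMonoidWithTop

variable {F Γ : Type*} [Field F] [AddCommGroup Γ] [LinearOrder Γ] [IsOrderedAddMonoid Γ]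
  (w : AddValuation F (WithTop Γ)) {c₁ c₂ c₃ : F}

theorem map_cubicDelta1 (h₂ : w 2 = 0) (h₃ : w 3 = 0) (hc₁ : w c₃ < 3 • w c₁)
    (hc₂ : 2 • w c₃ < 3 • w c₂) : w (cubicDelta1 c₁ c₂ c₃) = w c₃ := by
  have h₂₇ : w (27 * c₃) = w c₃ := by
    rw [map_mul, show (27 : F) = 3 ^ 3 by norm_num, map_pow, h₃, nsmul_zero, zero_add]
  have hc₁c₂ : w c₃ < w c₁ + w c₂ := by
    refine lt_of_nsmul_lt_nsmul_right 3 ?_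
    calc 3 • w c₃ = w c₃ + 2 • w c₃ := by rw [succ_nsmul', two_nsmul]
      _ < 3 • w c₁ + 3 • w c₂ := WithTop.add_lt_add hc₁ hc₂
      _ = 3 • (w c₁ + w c₂) := (nsmul_add _ _ _).symm
  have hlt : w (27 * c₃) < w (2 * c₁ ^ 3 - 9 * c₁ * c₂) := by
    refine h₂₇ ▸ (lt_min ?_ ?_).trans_le (w.map_sub _ _)
    · rwa [map_mul, map_pow, h₂, zero_add]
    · rwa [map_mul, map_mul, show (9 : F) = 3 ^ 2 by norm_num, map_pow, h₃, nsmul_zero,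
        zero_add]
  rw [cubicDelta1, w.map_add_eq_of_lt_right hlt, h₂₇]

theorem two_nsmul_lt_three_nsmul_map_cubicDelta0 (h₃ : w 3 = 0) (hc₁ : w c₃ < 3 • w c₁)
    (hc₂ : 2 • w c₃ < 3 • w c₂) : 2 • w c₃ < 3 • w (cubicDelta0 c₁ c₂) := by
  refine lt_of_lt_of_le ?_ (nsmul_le_nsmul_right (w.map_sub _ _) 3)
  rcases min_choice (w (c₁ ^ 2)) (w (3 * c₂)) with hmin | hmin <;> rw [hmin]
  · rw [map_pow, ← mul_nsmul', mul_nsmul, two_nsmul, two_nsmul]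
    exact WithTop.add_lt_add hc₁ hc₁
  · rwa [map_mul, h₃, zero_add]

end AddValuation

section CyclicCubic

variable {F : Type*} [Field F] {c₁ c₂ c₃ : F} {f : F[X]}

open IntermediateField

theorem exists_orbit_roots_of_card_gal_eq_three
    (hf : f = X ^ 3 + C c₁ * X ^ 2 + C c₂ * X + C c₃) (hirr : Irreducible f)
    (hsep : f.Separable) (hcard : Nat.card f.Gal = 3) :
    ∃ σ : f.Gal, Subgroup.zpowers σ = ⊤ ∧ ∃ r₁ r₂ r₃ : f.SplittingField,
      σ r₁ = r₂ ∧ σ r₂ = r₃ ∧ σ r₃ = r₁ ∧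
      algebraMap F _ c₁ = -(r₁ + r₂ + r₃) ∧ algebraMap F _ c₂ = r₁ * r₂ + r₁ * r₃ + r₂ * r₃ ∧
      algebraMap F _ c₃ = -(r₁ * r₂ * r₃) := by
  have : IsGalois F f.SplittingField := IsGalois.of_separable_splitting_field hsep
  have : Fact (Nat.Prime 3) := Nat.fact_prime_three
  have : Nontrivial f.Gal := Finite.one_lt_card_iff_nontrivial.mp (by rw [hcard]; norm_num)
  obtain ⟨σ, hσ⟩ := exists_ne (1 : f.Gal)
  have hσ₃ : σ ^ 3 = 1 := hcard ▸ pow_card_eq_one'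
  have hσ₂ : σ ^ 2 ≠ 1 :=
    pow_ne_one_of_lt_orderOf two_ne_zero (by rw [orderOf_eq_prime hσ₃ hσ]; norm_num)
  have hgen := zpowers_eq_top_of_prime_card hcard hσ
  have hgen₂ := zpowers_eq_top_of_prime_card hcard hσ₂
  have hdeg : f.natDegree = 3 := by rw [hf]; compute_degree!
  have hroot (x : f.SplittingField) (hx : aeval x f = 0) : x ∉ (⊥ : IntermediateField F _) :=
    hirr.notMem_bot_of_aeval_eq_zero (by rw [degree_eq_natDegree hirr.ne_zero, hdeg]; decide) hx
  have hσroot (x : f.SplittingField) (hx : aeval x f = 0) : aeval (σ x) f = 0 := by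
    rw [aeval_algHom_apply σ x f, hx, map_zero]
  obtain ⟨r₁, hr₁⟩ : ∃ r : f.SplittingField, aeval r f = 0 := by
    obtain ⟨r, hr⟩ := (SplittingField.splits f).exists_eval_eq_zero
      (by rw [degree_map, degree_eq_natDegree hirr.ne_zero, hdeg]; decide)
    exact ⟨r, by rwa [aeval_def, eval₂_eq_eval_map]⟩
  have hr₂ := hσroot _ hr₁
  have hr₃ := hσroot _ hr₂
  have hcycle : σ (σ (σ r₁)) = r₁ := by
    have h := DFunLike.congr_fun hσ₃ r₁
    rwa [pow_three] at h
  have hcubic (x : f.SplittingField) (hx : aeval x f = 0) :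
      x ^ 3 + algebraMap F _ c₁ * x ^ 2 + algebraMap F _ c₂ * x + algebraMap F _ c₃ = 0 := by
    simpa [hf, Algebra.smul_def] using hx
  refine ⟨σ, hgen, r₁, σ r₁, σ (σ r₁), rfl, rfl, hcycle, ?_⟩
  exact cubic_vieta (hcubic _ hr₁) (hcubic _ hr₂) (hcubic _ hr₃)
    (fun h => hroot _ hr₁ (mem_bot_of_apply_eq_self hgen h.symm))
    (fun h => hroot _ hr₁ (mem_bot_of_apply_eq_self hgen₂ h.symm))
    (fun h => hroot _ hr₂ (mem_bot_of_apply_eq_self hgen h.symm))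

theorem exists_kummer_pair_of_card_gal_eq_three {ω : F} (hω : IsPrimitiveRoot ω 3)
    (hf : f = X ^ 3 + C c₁ * X ^ 2 + C c₂ * X + C c₃) (hirr : Irreducible f)
    (hsep : f.Separable) (hcard : Nat.card f.Gal = 3) :
    ∃ b b' : F, b + b' = -cubicDelta1 c₁ c₂ c₃ ∧ b * b' = cubicDelta0 c₁ c₂ ^ 3 ∧
      ∀ β ∈ ({b, b'} : Set F), β ≠ 0 →
        ∃ r : f.SplittingField, r ^ 3 = algebraMap F _ β ∧ F⟮r⟯ = ⊤ := by
  have : IsGalois F f.SplittingField := IsGalois.of_separable_splitting_field hsep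
  have hrank : (Module.finrank F f.SplittingField).Prime := by
    rw [← IsGalois.card_aut_eq_finrank]; exact hcard ▸ Nat.prime_three
  obtain ⟨σ, hgen, r₁, r₂, r₃, h₁, h₂, h₃, e₁, e₂, e₃⟩ :=
    exists_orbit_roots_of_card_gal_eq_three hf hirr hsep hcard
  have hω₃ : ω ^ 3 = 1 := hω.pow_eq_one
  have hω₂ : ω ^ 2 + ω + 1 = 0 := by
    have h := hω.geom_sum_eq_zero (by norm_num)
    simp only [Finset.sum_range_succ, Finset.sum_range_zero] at h
    linear_combination h
  set ω' := algebraMap F f.SplittingField ω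
  have hω'₃ : ω' ^ 3 = 1 := by rw [← map_pow, hω₃, map_one]
  have hω'₂ : ω' ^ 2 + ω' + 1 = 0 := by
    simpa using congrArg (algebraMap F f.SplittingField) hω₂
  have hσω' : σ ω' = ω' := σ.commutes ω
  set δ := lagrangeResolvent ω' r₁ r₂ r₃
  set δ' := lagrangeResolvent ω' r₁ r₃ r₂
  have hσδ : σ δ = algebraMap F _ (ω ^ 2) * δ := by
    rw [map_lagrangeResolvent, hσω', h₁, h₂, h₃, map_pow,
      lagrangeResolvent_rotate_left hω'₃]
  have hσδ' : σ δ' = algebraMap F _ ω * δ' := by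
    rw [map_lagrangeResolvent, hσω', h₁, h₂, h₃, lagrangeResolvent_rotate_right hω'₃]
  obtain ⟨b, hb⟩ := mem_bot.mp <| pow_mem_bot_of_apply_eq_mul hgen
    (by rw [← pow_mul, pow_mul', hω₃, one_pow]) hσδ
  obtain ⟨b', hb'⟩ := mem_bot.mp <| pow_mem_bot_of_apply_eq_mul hgen hω₃ hσδ'
  refine ⟨b, b', (algebraMap F f.SplittingField).injective ?_,
    (algebraMap F f.SplittingField).injective ?_, ?_⟩
  · simp only [cubicDelta1, map_neg, map_add, map_sub, map_mul, map_pow, map_ofNat, hb, hb', e₁,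
      e₂, e₃]
    rw [lagrangeResolvent_pow_three_add_swap hω'₂]
    ring
  · simp only [cubicDelta0, map_mul, map_sub, map_pow, map_ofNat, hb, hb', e₁, e₂]
    rw [← mul_pow, lagrangeResolvent_mul_swap hω'₂]
    ring
  · rintro β (rfl | rfl) hβ
    · refine ⟨δ, hb.symm, adjoin_simple_eq_top_of_apply_eq_mul hrank
        (hω.pow_ne_one_of_pos_of_lt two_ne_zero (by norm_num)) ?_ hσδ⟩
      rintro hδ
      simp [hδ, hβ] at hb
    · refine ⟨δ', hb'.symm, adjoin_simple_eq_top_of_apply_eq_mul hrank (hω.ne_one (by norm_num)) ?_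
        hσδ'⟩
      rintro hδ'
      simp [hδ', hβ] at hb'

end CyclicCubic

theorem stmt_17_general (F : Type*) [Field F] (p : ℕ) (hp : p.Prime) (hp5 : 5 ≤ p) [CharP F p]
    (ω : F) (hω : IsPrimitiveRoot ω 3)
    (Γ : Type*) [AddCommGroup Γ] [LinearOrder Γ] [IsOrderedAddMonoid Γ] (v : F → Γ)
    (hmul : ∀ a b : F, a ≠ 0 → b ≠ 0 → v (a * b) = v a + v b)
    (hadd : ∀ a b : F, a ≠ 0 → b ≠ 0 → a + b ≠ 0 → min (v a) (v b) ≤ v (a + b))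
    (c₁ c₂ c₃ : F) (hc₃ : c₃ ≠ 0)
    (f : F[X]) (hf : f = X ^ 3 + C c₁ * X ^ 2 + C c₂ * X + C c₃)
    (hirr : Irreducible f) (hdeg : Nat.card f.Gal = 3)
    (hv₁ : c₁ ≠ 0 → v c₃ < 3 • v c₁)
    (hv₂ : c₂ ≠ 0 → 2 • v c₃ < 3 • v c₂) :
    ∃ β : F, β ≠ 0 ∧ v β = v c₃ ∧
      ∃ r : f.SplittingField, r ^ 3 = algebraMap F f.SplittingField β ∧
        IntermediateField.adjoin F {r} = ⊤ := by
  have : Fact p.Prime := ⟨hp⟩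
  have hndvd (n : ℕ) (h₀ : 0 < n) (hn : n < 5) : ¬p ∣ n :=
    Nat.not_dvd_of_pos_of_lt h₀ (by omega)
  have hsep : f.Separable := hirr.separable_of_not_dvd_natDegree p (by
    rw [show f.natDegree = 3 by rw [hf]; compute_degree!]
    exact hndvd 3 three_pos (by norm_num))
  obtain ⟨b, b', hsum, hprod, hgen⟩ :=
    exists_kummer_pair_of_card_gal_eq_three hω hf hirr hsep hdeg
  set w := AddValuation.ofNonzero v hmul hadd
  have h₂ : w 2 = 0 := by exact_mod_cast w.map_natCast_of_charP p (hndvd 2 two_pos (by norm_num))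
  have h₃ : w 3 = 0 := by exact_mod_cast w.map_natCast_of_charP p (hndvd 3 three_pos (by norm_num))
  have hw₃ : w c₃ = v c₃ := AddValuation.ofNonzero_apply hc₃
  have hc₁ : w c₃ < 3 • w c₁ := hw₃ ▸ AddValuation.coe_lt_nsmul_ofNonzero three_ne_zero hv₁
  have hc₂ : 2 • w c₃ < 3 • w c₂ := by
    rw [hw₃, ← WithTop.coe_nsmul]
    exact AddValuation.coe_lt_nsmul_ofNonzero three_ne_zero hv₂
  have hΔ₁ := w.map_cubicDelta1 h₂ h₃ hc₁ hc₂
  obtain ⟨β, hβ, hwβ⟩ := w.exists_mem_pair_map_eq_map_add (b := b) (b' := b') (by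
    rw [hsum, hprod, w.map_neg, w.map_pow, hΔ₁]
    exact w.two_nsmul_lt_three_nsmul_map_cubicDelta0 h₃ hc₁ hc₂)
  rw [hsum, w.map_neg, hΔ₁, hw₃] at hwβ
  have hβ₀ : β ≠ 0 := by rintro rfl; simp at hwβ
  refine ⟨β, hβ₀, ?_, hgen β hβ hβ₀⟩
  rwa [AddValuation.ofNonzero_apply hβ₀, WithTop.coe_inj] at hwβ

/-- Let `F` be a field of characteristic `p ≥ 5` containing `√3` and a primitive cube root
of unity, with a valuation `v`. If `f = x³ + c₁x² + c₂x + c₃ ∈ F[x]` is irreducible with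
cyclic Galois group of order `3`, and `v(c₁) > v(c₃)/3` and `v(c₂) > 2v(c₃)/3` (stated
fraction-freely), then the splitting field of `f` over `F` is generated by a cube root of
some `β ∈ F` with `v(β) = v(c₃)`. -/
theorem stmt_17 (F : Type*) [Field F] (p : ℕ) (hp : p.Prime) (hp5 : 5 ≤ p) [CharP F p]
    (sqrt3 : F) (hsqrt3 : sqrt3 ^ 2 = 3) (ω : F) (hω : IsPrimitiveRoot ω 3)
    (Γ : Type*) [AddCommGroup Γ] [LinearOrder Γ] [IsOrderedAddMonoid Γ] (v : F → Γ)
    (hmul : ∀ a b : F, a ≠ 0 → b ≠ 0 → v (a * b) = v a + v b)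
    (hadd : ∀ a b : F, a ≠ 0 → b ≠ 0 → a + b ≠ 0 → min (v a) (v b) ≤ v (a + b))
    (c₁ c₂ c₃ : F) (hc₃ : c₃ ≠ 0)
    (f : F[X]) (hf : f = X ^ 3 + C c₁ * X ^ 2 + C c₂ * X + C c₃)
    (hirr : Irreducible f) (hcyc : IsCyclic f.Gal) (hdeg : Nat.card f.Gal = 3)
    (hv₁ : c₁ ≠ 0 → v c₃ < 3 • v c₁)
    (hv₂ : c₂ ≠ 0 → 2 • v c₃ < 3 • v c₂) :
    ∃ β : F, β ≠ 0 ∧ v β = v c₃ ∧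
      ∃ r : f.SplittingField, r ^ 3 = algebraMap F f.SplittingField β ∧
        IntermediateField.adjoin F {r} = ⊤ :=
  stmt_17_general F p hp hp5 ω hω Γ v hmul hadd c₁ c₂ c₃ hc₃ f hf hirr hdeg hv₁ hv₂
end
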